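/- Let T = (R,V,W,S) be a Morita context. The prime radical of T equals (P(R), V_0, W_0, P(S)), where V_0 = {v ∈ V : vW ⊆ P(R)} = {v ∈ V : Wv ⊆ P(S)} and W_0 = {w ∈ W : wV ⊆ P(S)} = {w ∈ W : Vw ⊆ P(R)}. -/

import Mathlib

/-- A Morita context `(R,V,W,S)`: rings `R`, `S`, an `(R,S)`-bimodule `V`,
an `(S,R)`-bimodule `W`, and context products `V × W → R`, `W × V → S`
making the `2 × 2` matrix set an associative ring. -/
structure MoritaContext (R S V W : Type*) [Ring R] [Ring S]
    [AddCommGroup V] [AddCommGroup W] : Type _ where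
  smulRV : R → V → V
  smulVS : V → S → V
  smulSW : S → W → W
  smulWR : W → R → W
  mulVW : V → W → R
  mulWV : W → V → S
  smulRV_add : ∀ r v v', smulRV r (v + v') = smulRV r v + smulRV r v'
  add_smulRV : ∀ r r' v, smulRV (r + r') v = smulRV r v + smulRV r' v
  mul_smulRV : ∀ r r' v, smulRV (r * r') v = smulRV r (smulRV r' v)
  one_smulRV : ∀ v, smulRV 1 v = v
  smulVS_add : ∀ v v' s, smulVS (v + v') s = smulVS v s + smulVS v' s
  add_smulVS : ∀ v s s', smulVS v (s + s') = smulVS v s + smulVS v s'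
  mul_smulVS : ∀ v s s', smulVS v (s * s') = smulVS (smulVS v s) s'
  one_smulVS : ∀ v, smulVS v 1 = v
  smul_assocRVS : ∀ r v s, smulVS (smulRV r v) s = smulRV r (smulVS v s)
  smulSW_add : ∀ s w w', smulSW s (w + w') = smulSW s w + smulSW s w'
  add_smulSW : ∀ s s' w, smulSW (s + s') w = smulSW s w + smulSW s' w
  mul_smulSW : ∀ s s' w, smulSW (s * s') w = smulSW s (smulSW s' w)
  one_smulSW : ∀ w, smulSW 1 w = w
  smulWR_add : ∀ w w' r, smulWR (w + w') r = smulWR w r + smulWR w' r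
  add_smulWR : ∀ w r r', smulWR w (r + r') = smulWR w r + smulWR w r'
  mul_smulWR : ∀ w r r', smulWR w (r * r') = smulWR (smulWR w r) r'
  one_smulWR : ∀ w, smulWR w 1 = w
  smul_assocSWR : ∀ s w r, smulWR (smulSW s w) r = smulSW s (smulWR w r)
  mulVW_add_left : ∀ v v' w, mulVW (v + v') w = mulVW v w + mulVW v' w
  mulVW_add_right : ∀ v w w', mulVW v (w + w') = mulVW v w + mulVW v w'
  mulWV_add_left : ∀ w w' v, mulWV (w + w') v = mulWV w v + mulWV w' v
  mulWV_add_right : ∀ w v v', mulWV w (v + v') = mulWV w v + mulWV w v'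
  mulVW_smulR : ∀ r v w, mulVW (smulRV r v) w = r * mulVW v w
  mulVW_smulS : ∀ v s w, mulVW (smulVS v s) w = mulVW v (smulSW s w)
  mulVW_smulWR : ∀ v w r, mulVW v (smulWR w r) = mulVW v w * r
  mulWV_smulS : ∀ s w v, mulWV (smulSW s w) v = s * mulWV w v
  mulWV_smulR : ∀ w r v, mulWV (smulWR w r) v = mulWV w (smulRV r v)
  mulWV_smulVS : ∀ w v s, mulWV w (smulVS v s) = mulWV w v * s
  assocVWV : ∀ v w v', smulRV (mulVW v w) v' = smulVS v (mulWV w v')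
  assocWVW : ∀ w v w', smulSW (mulWV w v) w' = smulWR w (mulVW v w')

namespace MoritaContext

variable {R S V W : Type*} [Ring R] [Ring S] [AddCommGroup V] [AddCommGroup W]
variable (M : MoritaContext R S V W)

/-- The underlying set of the Morita context ring: matrices `((r,v),(w,s))`. -/
def Mat (_ : MoritaContext R S V W) : Type _ := (R × V) × (W × S)

instance : AddCommGroup M.Mat := inferInstanceAs (AddCommGroup ((R × V) × (W × S)))


@[simp] lemma add_fst_fst (a b : M.Mat) : (a + b).1.1 = a.1.1 + b.1.1 := rfl
@[simp] lemma add_fst_snd (a b : M.Mat) : (a + b).1.2 = a.1.2 + b.1.2 := rfl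
@[simp] lemma add_snd_fst (a b : M.Mat) : (a + b).2.1 = a.2.1 + b.2.1 := rfl
@[simp] lemma add_snd_snd (a b : M.Mat) : (a + b).2.2 = a.2.2 + b.2.2 := rfl
@[simp] lemma neg_fst_fst (a : M.Mat) : (-a).1.1 = -a.1.1 := rfl
@[simp] lemma neg_fst_snd (a : M.Mat) : (-a).1.2 = -a.1.2 := rfl
@[simp] lemma neg_snd_fst (a : M.Mat) : (-a).2.1 = -a.2.1 := rfl
@[simp] lemma neg_snd_snd (a : M.Mat) : (-a).2.2 = -a.2.2 := rfl
@[simp] lemma zero_fst_fst : (0 : M.Mat).1.1 = 0 := rfl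
@[simp] lemma zero_fst_snd : (0 : M.Mat).1.2 = 0 := rfl
@[simp] lemma zero_snd_fst : (0 : M.Mat).2.1 = 0 := rfl
@[simp] lemma zero_snd_snd : (0 : M.Mat).2.2 = 0 := rfl

/-- The matrix `((r,v),(w,s))` as an element of the Morita context ring. -/
def mat (r : R) (v : V) (w : W) (s : S) : M.Mat := ((r, v), (w, s))

lemma smulRV_zero (r : R) : M.smulRV r 0 = 0 := by
  have h := M.smulRV_add r 0 0
  rw [add_zero] at h
  exact (add_eq_left.mp h.symm)

lemma zero_smulRV (v : V) : M.smulRV 0 v = 0 := by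
  have h := M.add_smulRV 0 0 v
  rw [add_zero] at h
  exact (add_eq_left.mp h.symm)

lemma smulVS_zero (v : V) : M.smulVS v 0 = 0 := by
  have h := M.add_smulVS v 0 0
  rw [add_zero] at h
  exact (add_eq_left.mp h.symm)

lemma zero_smulVS (s : S) : M.smulVS 0 s = 0 := by
  have h := M.smulVS_add 0 0 s
  rw [add_zero] at h
  exact (add_eq_left.mp h.symm)

lemma smulSW_zero (s : S) : M.smulSW s 0 = 0 := by
  have h := M.smulSW_add s 0 0
  rw [add_zero] at h
  exact (add_eq_left.mp h.symm)

lemma zero_smulSW (w : W) : M.smulSW 0 w = 0 := by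
  have h := M.add_smulSW 0 0 w
  rw [add_zero] at h
  exact (add_eq_left.mp h.symm)

lemma smulWR_zero (w : W) : M.smulWR w 0 = 0 := by
  have h := M.add_smulWR w 0 0
  rw [add_zero] at h
  exact (add_eq_left.mp h.symm)

lemma zero_smulWR (r : R) : M.smulWR 0 r = 0 := by
  have h := M.smulWR_add 0 0 r
  rw [add_zero] at h
  exact (add_eq_left.mp h.symm)

lemma mulVW_zero (v : V) : M.mulVW v 0 = 0 := by
  have h := M.mulVW_add_right v 0 0
  rw [add_zero] at h
  exact (add_eq_left.mp h.symm)

lemma zero_mulVW (w : W) : M.mulVW 0 w = 0 := by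
  have h := M.mulVW_add_left 0 0 w
  rw [add_zero] at h
  exact (add_eq_left.mp h.symm)

lemma mulWV_zero (w : W) : M.mulWV w 0 = 0 := by
  have h := M.mulWV_add_right w 0 0
  rw [add_zero] at h
  exact (add_eq_left.mp h.symm)

lemma zero_mulWV (v : V) : M.mulWV 0 v = 0 := by
  have h := M.mulWV_add_left 0 0 v
  rw [add_zero] at h
  exact (add_eq_left.mp h.symm)


lemma mat_ext {a b : M.Mat} (h1 : a.1.1 = b.1.1) (h2 : a.1.2 = b.1.2)
    (h3 : a.2.1 = b.2.1) (h4 : a.2.2 = b.2.2) : a = b :=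
  Prod.ext (Prod.ext h1 h2) (Prod.ext h3 h4)

/-- Multiplication in the Morita context ring. -/
def matMul (a b : M.Mat) : M.Mat :=
  ((a.1.1 * b.1.1 + M.mulVW a.1.2 b.2.1, M.smulRV a.1.1 b.1.2 + M.smulVS a.1.2 b.2.2),
   (M.smulWR a.2.1 b.1.1 + M.smulSW a.2.2 b.2.1, M.mulWV a.2.1 b.1.2 + a.2.2 * b.2.2))

/-- The ring structure on the Morita context matrices. -/
instance : Ring M.Mat where
  __ := (inferInstanceAs (AddCommGroup ((R × V) × (W × S))) : AddCommGroup M.Mat)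
  mul := M.matMul
  one := ((1, 0), (0, 1))
  left_distrib a b c := by
    show M.matMul a (b + c) = M.matMul a b + M.matMul a c
    refine M.mat_ext ?_ ?_ ?_ ?_ <;> simp only [M.add_fst_fst, M.add_fst_snd, M.add_snd_fst, M.add_snd_snd] <;>
      simp [matMul, M.smulRV_add, M.add_smulVS, M.smulSW_add, M.add_smulWR,
        M.mulVW_add_right, M.mulWV_add_right, mul_add] <;> abel
  right_distrib a b c := by
    show M.matMul (a + b) c = M.matMul a c + M.matMul b c
    refine M.mat_ext ?_ ?_ ?_ ?_ <;> simp only [M.add_fst_fst, M.add_fst_snd, M.add_snd_fst, M.add_snd_snd] <;>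
      simp [matMul, M.add_smulRV, M.smulVS_add, M.add_smulSW, M.smulWR_add,
        M.mulVW_add_left, M.mulWV_add_left, add_mul] <;> abel
  zero_mul a := by
    show M.matMul 0 a = 0
    simp [matMul, M.zero_smulRV, M.zero_smulVS, M.zero_smulSW, M.zero_smulWR,
      M.zero_mulVW, M.zero_mulWV] <;> rfl
  mul_zero a := by
    show M.matMul a 0 = 0
    simp [matMul, M.smulRV_zero, M.smulVS_zero, M.smulSW_zero, M.smulWR_zero,
      M.mulVW_zero, M.mulWV_zero] <;> rfl
  mul_assoc a b c := by
    show M.matMul (M.matMul a b) c = M.matMul a (M.matMul b c)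
    refine M.mat_ext ?_ ?_ ?_ ?_ <;>
      simp [matMul, M.smulRV_add, M.add_smulRV, M.mul_smulRV, M.smulVS_add, M.add_smulVS,
        M.mul_smulVS, M.smul_assocRVS, M.smulSW_add, M.add_smulSW, M.mul_smulSW,
        M.smulWR_add, M.add_smulWR, M.mul_smulWR, M.smul_assocSWR,
        M.mulVW_add_left, M.mulVW_add_right, M.mulWV_add_left, M.mulWV_add_right,
        M.mulVW_smulR, M.mulVW_smulS, M.mulVW_smulWR, M.mulWV_smulS, M.mulWV_smulR,
        M.mulWV_smulVS, M.assocVWV, M.assocWVW, mul_add, add_mul, mul_assoc] <;> abel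
  one_mul a := by
    show M.matMul ((1, 0), (0, 1)) a = a
    simp [matMul, M.one_smulRV, M.one_smulSW, M.zero_smulVS, M.zero_smulWR,
      M.zero_mulVW, M.zero_mulWV] <;> rfl
  mul_one a := by
    show M.matMul a ((1, 0), (0, 1)) = a
    simp [matMul, M.one_smulVS, M.one_smulWR, M.smulRV_zero, M.smulSW_zero,
      M.mulVW_zero, M.mulWV_zero] <;> rfl

/-- The "rectangular" subset `(I, V₁, W₁, J)` of the Morita context ring. -/
def rect (I : Set R) (V₁ : Set V) (W₁ : Set W) (J : Set S) : Set M.Mat :=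
  {t | t.1.1 ∈ I ∧ t.1.2 ∈ V₁ ∧ t.2.1 ∈ W₁ ∧ t.2.2 ∈ J}

end MoritaContext

/-- A subset of a ring is a right ideal. -/
def IsRightIdealSet {A : Type*} [Ring A] (U : Set A) : Prop :=
  (0 : A) ∈ U ∧ (∀ a ∈ U, ∀ b ∈ U, a + b ∈ U) ∧ (∀ a ∈ U, -a ∈ U) ∧
    ∀ a ∈ U, ∀ t : A, a * t ∈ U

/-- A subset of a ring is a two-sided ideal. -/
def IsIdealSet {A : Type*} [Ring A] (U : Set A) : Prop :=
  (0 : A) ∈ U ∧ (∀ a ∈ U, ∀ b ∈ U, a + b ∈ U) ∧ (∀ a ∈ U, -a ∈ U) ∧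
    (∀ a ∈ U, ∀ t : A, a * t ∈ U) ∧ ∀ a ∈ U, ∀ t : A, t * a ∈ U

/-- A proper two-sided ideal `U` is prime if `aAb ⊆ U` implies `a ∈ U` or `b ∈ U`. -/
def IsPrimeIdealSet {A : Type*} [Ring A] (U : Set A) : Prop :=
  IsIdealSet U ∧ U ≠ Set.univ ∧ ∀ a b : A, (∀ x : A, a * x * b ∈ U) → a ∈ U ∨ b ∈ U

/-- A proper two-sided ideal `U` is semiprime if `aAa ⊆ U` implies `a ∈ U`. -/
def IsSemiprimeIdealSet {A : Type*} [Ring A] (U : Set A) : Prop :=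
  IsIdealSet U ∧ U ≠ Set.univ ∧ ∀ a : A, (∀ x : A, a * x * a ∈ U) → a ∈ U

/-- A proper right ideal `U` is prime if `aAb ⊆ U` implies `a ∈ U` or `b ∈ U`. -/
def IsPrimeRightIdealSet {A : Type*} [Ring A] (U : Set A) : Prop :=
  IsRightIdealSet U ∧ U ≠ Set.univ ∧ ∀ a b : A, (∀ x : A, a * x * b ∈ U) → a ∈ U ∨ b ∈ U

/-- The prime radical of a ring: the intersection of all its prime ideals. -/
def primeRadicalSet (A : Type*) [Ring A] : Set A := ⋂₀ {U | IsPrimeIdealSet U}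

/-- A ring `A` is prime if `aAb = 0` implies `a = 0` or `b = 0`. -/
def IsPrimeRing (A : Type*) [Ring A] : Prop :=
  ∀ a b : A, (∀ x : A, a * x * b = 0) → a = 0 ∨ b = 0

/-- A ring `A` is semiprime if `aAa = 0` implies `a = 0`. -/
def IsSemiprimeRing (A : Type*) [Ring A] : Prop :=
  ∀ a : A, (∀ x : A, a * x * a = 0) → a = 0

/-- The Morita context `(A,A,A,A)` over a commutative ring with all products
given by multiplication in `A`. -/
def MoritaContext.ofComm (A : Type*) [CommRing A] : MoritaContext A A A A := by
  refine ⟨(· * ·), (· * ·), (· * ·), (· * ·), (· * ·), (· * ·), ?_, ?_, ?_, ?_, ?_, ?_, ?_, ?_, ?_, ?_, ?_, ?_, ?_, ?_, ?_, ?_, ?_, ?_, ?_, ?_, ?_, ?_, ?_, ?_, ?_, ?_, ?_, ?_, ?_, ?_⟩ <;>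
    intros <;> ring

/-- The Morita context `(A, I, J, A)` over a commutative ring `A` with ideals
`I`, `J`, all products given by multiplication in `A`. -/
def MoritaContext.ofIdeals (A : Type*) [CommRing A] (I J : Ideal A) :
    MoritaContext A A I J := by
  refine ⟨fun r v => ⟨r * v.1, I.mul_mem_left r v.2⟩,
    fun v s => ⟨v.1 * s, I.mul_mem_right s v.2⟩,
    fun s w => ⟨s * w.1, J.mul_mem_left s w.2⟩,
    fun w r => ⟨w.1 * r, J.mul_mem_right r w.2⟩,
    fun v w => v.1 * w.1, fun w v => w.1 * v.1, ?_, ?_, ?_, ?_, ?_, ?_, ?_, ?_, ?_, ?_, ?_, ?_, ?_, ?_, ?_, ?_, ?_, ?_, ?_, ?_, ?_, ?_, ?_, ?_, ?_, ?_, ?_, ?_, ?_, ?_⟩ <;>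
    intros <;> first
      | (apply Subtype.ext; push_cast; ring)
      | (push_cast; ring)

/-!
A prime ideal `P` of the corner ring `R` of `T` lifts to the prime ideal `{t | (T t T)₁₁ ⊆ P}`
of `T`, so every `t ∈ P(T)` has all its compressions `(x t y)₁₁` in `P(R)` and `(x t y)₂₂` in
`P(S)`. Conversely, for a prime ideal `Q` of `T` the corner `{r | diag(r, 0) ∈ Q}` is either `R`
or prime, hence contains `P(R)`; an off-diagonal matrix `e` with `vW ⊆ P(R)` or `Wv ⊆ P(S)`
satisfies `e T e ⊆ Q` by factoring through such a diagonal corner, so `e ∈ Q` since prime ideals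
are semiprime. Reading both facts on the four corners gives the description of `P(T)`, and
comparing the conditions on `v` (resp. `w`) through the products `wv` and `vw` gives the
equalities.
-/

section PrimeIdealSet

variable {A B : Type*} [Ring A] [Ring B]

lemma IsIdealSet.eq_univ_of_one_mem {U : Set A} (hU : IsIdealSet U) (h1 : (1 : A) ∈ U) :
    U = Set.univ :=
  Set.eq_univ_of_forall fun a => by simpa using hU.2.2.2.2 1 h1 a

lemma IsIdealSet.preimage (f : B →ₙ+* A) {U : Set A} (hU : IsIdealSet U) :
    IsIdealSet (f ⁻¹' U) := by
  obtain ⟨h0, hadd, hneg, hmul_right, hmul_left⟩ := hU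
  refine ⟨?_, fun a ha b hb => ?_, fun a ha => ?_, fun a ha t => ?_, fun a ha t => ?_⟩
  · simpa using h0
  · simpa using hadd _ ha _ hb
  · simpa using hneg _ ha
  · simpa using hmul_right _ ha (f t)
  · simpa using hmul_left _ ha (f t)

lemma IsPrimeIdealSet.one_notMem {U : Set A} (hU : IsPrimeIdealSet U) : (1 : A) ∉ U :=
  fun h => hU.2.1 (hU.1.eq_univ_of_one_mem h)

lemma IsPrimeIdealSet.mem_of_forall_mul_mul_self_mem {U : Set A} (hU : IsPrimeIdealSet U)
    {a : A} (h : ∀ x, a * x * a ∈ U) : a ∈ U :=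
  (hU.2.2 a a h).elim id id

/-- `ι` and `π` behave like the inclusion of a corner ring `eAe` into `A` and the
compression `u ↦ e u e`. -/
lemma primeRadicalSet_subset_preimage (ι : B →ₙ+* A) (π : A → B)
    (hι : ∀ a b x, ι a * x * ι b = ι (a * π x * b)) {Q : Set A} (hQ : IsPrimeIdealSet Q) :
    primeRadicalSet B ⊆ ι ⁻¹' Q := by
  by_cases h1 : (1 : B) ∈ ι ⁻¹' Q
  · rw [(hQ.1.preimage ι).eq_univ_of_one_mem h1]
    exact Set.subset_univ _
  · refine Set.sInter_subset_of_mem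
      ⟨hQ.1.preimage ι, fun h => h1 (h ▸ Set.mem_univ _), fun a b hab => ?_⟩
    refine hQ.2.2 _ _ fun x => ?_
    rw [hι]
    exact hab _

/-- The largest ideal of `A` whose compression by `π` lies in `P`. -/
def cornerLift (π : A →+ B) (P : Set B) : Set A := {t | ∀ x y, π (x * t * y) ∈ P}

lemma isPrimeIdealSet_cornerLift (π : A →+ B) (ι : B → A) (hπ : π 1 = 1)
    (hπι : ∀ u c v, π (u * ι c * v) = π u * c * π v) {P : Set B} (hP : IsPrimeIdealSet P) :
    IsPrimeIdealSet (cornerLift π P) := by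
  have h1 := hP.one_notMem
  obtain ⟨⟨h0, hadd, hneg, -, -⟩, -, hprime⟩ := hP
  refine ⟨⟨fun x y => ?_, fun a ha b hb x y => ?_, fun a ha x y => ?_,
    fun a ha t x y => ?_, fun a ha t x y => ?_⟩, fun h => ?_, fun a b hab => ?_⟩
  · simpa using h0
  · simpa [mul_add, add_mul] using hadd _ (ha x y) _ (hb x y)
  · simpa using hneg _ (ha x y)
  · simpa [mul_assoc] using ha x (t * y)
  · simpa [mul_assoc] using ha (x * t) y
  · have h1A : (1 : A) ∈ cornerLift π P := h ▸ Set.mem_univ _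
    exact h1 (by simpa [hπ] using h1A 1 1)
  · by_contra! hnot
    obtain ⟨ha, hb⟩ := hnot
    simp only [cornerLift, Set.mem_ofPred_eq, not_forall] at ha hb
    obtain ⟨x₀, y₀, ha⟩ := ha
    obtain ⟨x, y, hb⟩ := hb
    -- `x₀ a y₀ · ι c · x b y` lies in `x₀ (a A b) y`
    refine (hprime _ _ fun c => ?_).elim ha hb
    rw [← hπι, show x₀ * a * y₀ * ι c * (x * b * y) = x₀ * (a * (y₀ * ι c * x) * b) * y by
        simp only [mul_assoc]]
    exact hab _ _ _

lemma primeRadicalSet_subset_cornerLift (π : A →+ B) (ι : B → A) (hπ : π 1 = 1)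
    (hπι : ∀ u c v, π (u * ι c * v) = π u * c * π v) :
    primeRadicalSet A ⊆ cornerLift π (primeRadicalSet B) :=
  fun _ ht x y => Set.mem_sInter.2 fun _ hP =>
    Set.mem_sInter.1 ht _ (isPrimeIdealSet_cornerLift π ι hπ hπι hP) x y

end PrimeIdealSet

namespace MoritaContext

variable {R S V W : Type*} [Ring R] [Ring S] [AddCommGroup V] [AddCommGroup W]
variable (M : MoritaContext R S V W)

attribute [local simp] smulRV_zero zero_smulRV smulVS_zero zero_smulVS smulSW_zero zero_smulSW
  smulWR_zero zero_smulWR mulVW_zero zero_mulVW mulWV_zero zero_mulWV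

@[simp] lemma mat_fst_fst (r : R) (v : V) (w : W) (s : S) : (M.mat r v w s).1.1 = r := rfl
@[simp] lemma mat_fst_snd (r : R) (v : V) (w : W) (s : S) : (M.mat r v w s).1.2 = v := rfl
@[simp] lemma mat_snd_fst (r : R) (v : V) (w : W) (s : S) : (M.mat r v w s).2.1 = w := rfl
@[simp] lemma mat_snd_snd (r : R) (v : V) (w : W) (s : S) : (M.mat r v w s).2.2 = s := rfl

@[simp] lemma one_fst_fst : (1 : M.Mat).1.1 = 1 := rfl
@[simp] lemma one_fst_snd : (1 : M.Mat).1.2 = 0 := rfl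
@[simp] lemma one_snd_fst : (1 : M.Mat).2.1 = 0 := rfl
@[simp] lemma one_snd_snd : (1 : M.Mat).2.2 = 1 := rfl

@[simp] lemma mul_fst_fst (a b : M.Mat) :
    (a * b).1.1 = a.1.1 * b.1.1 + M.mulVW a.1.2 b.2.1 := rfl
@[simp] lemma mul_fst_snd (a b : M.Mat) :
    (a * b).1.2 = M.smulRV a.1.1 b.1.2 + M.smulVS a.1.2 b.2.2 := rfl
@[simp] lemma mul_snd_fst (a b : M.Mat) :
    (a * b).2.1 = M.smulWR a.2.1 b.1.1 + M.smulSW a.2.2 b.2.1 := rfl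
@[simp] lemma mul_snd_snd (a b : M.Mat) :
    (a * b).2.2 = M.mulWV a.2.1 b.1.2 + a.2.2 * b.2.2 := rfl

def projR : M.Mat →+ R where
  toFun t := t.1.1
  map_zero' := rfl
  map_add' _ _ := rfl

def projS : M.Mat →+ S where
  toFun t := t.2.2
  map_zero' := rfl
  map_add' _ _ := rfl

@[simp] lemma projR_apply (t : M.Mat) : M.projR t = t.1.1 := rfl
@[simp] lemma projS_apply (t : M.Mat) : M.projS t = t.2.2 := rfl

def inclR : R →ₙ+* M.Mat where
  toFun r := M.mat r 0 0 0
  map_mul' a b := by refine M.mat_ext ?_ ?_ ?_ ?_ <;> simp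
  map_zero' := rfl
  map_add' a b := by refine M.mat_ext ?_ ?_ ?_ ?_ <;> simp

def inclS : S →ₙ+* M.Mat where
  toFun s := M.mat 0 0 0 s
  map_mul' a b := by refine M.mat_ext ?_ ?_ ?_ ?_ <;> simp
  map_zero' := rfl
  map_add' a b := by refine M.mat_ext ?_ ?_ ?_ ?_ <;> simp

def ofV (v : V) : M.Mat := M.mat 0 v 0 0

def ofW (w : W) : M.Mat := M.mat 0 0 w 0

@[simp] lemma inclR_apply (r : R) : M.inclR r = M.mat r 0 0 0 := rfl
@[simp] lemma inclS_apply (s : S) : M.inclS s = M.mat 0 0 0 s := rfl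

lemma inclR_mul_mul_inclR (a b : R) (x : M.Mat) :
    M.inclR a * x * M.inclR b = M.inclR (a * M.projR x * b) := by
  refine M.mat_ext ?_ ?_ ?_ ?_ <;> simp

lemma inclS_mul_mul_inclS (a b : S) (x : M.Mat) :
    M.inclS a * x * M.inclS b = M.inclS (a * M.projS x * b) := by
  refine M.mat_ext ?_ ?_ ?_ ?_ <;> simp

lemma projR_mul_inclR_mul (u : M.Mat) (c : R) (v : M.Mat) :
    M.projR (u * M.inclR c * v) = M.projR u * c * M.projR v := by
  simp

lemma projS_mul_inclS_mul (u : M.Mat) (c : S) (v : M.Mat) :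
    M.projS (u * M.inclS c * v) = M.projS u * c * M.projS v := by
  simp [mul_assoc]

lemma ofV_mul_mul_ofV (v : V) (z : M.Mat) :
    M.ofV v * z * M.ofV v = M.inclR (M.mulVW v z.2.1) * M.ofV v := by
  refine M.mat_ext ?_ ?_ ?_ ?_ <;> simp [ofV]

lemma ofV_mul_mul_ofV' (v : V) (z : M.Mat) :
    M.ofV v * z * M.ofV v = M.ofV v * M.inclS (M.mulWV z.2.1 v) := by
  refine M.mat_ext ?_ ?_ ?_ ?_ <;> simp [ofV, M.assocVWV]

lemma ofW_mul_mul_ofW (w : W) (z : M.Mat) :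
    M.ofW w * z * M.ofW w = M.inclS (M.mulWV w z.1.2) * M.ofW w := by
  refine M.mat_ext ?_ ?_ ?_ ?_ <;> simp [ofW]

lemma ofW_mul_mul_ofW' (w : W) (z : M.Mat) :
    M.ofW w * z * M.ofW w = M.ofW w * M.inclR (M.mulVW z.1.2 w) := by
  refine M.mat_ext ?_ ?_ ?_ ?_ <;> simp [ofW, M.assocWVW]

lemma inclR_add_ofV_add_ofW_add_inclS (t : M.Mat) :
    M.inclR t.1.1 + M.ofV t.1.2 + M.ofW t.2.1 + M.inclS t.2.2 = t := by
  refine M.mat_ext ?_ ?_ ?_ ?_ <;> simp [ofV, ofW]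

section IsPrimeIdealSet

variable {M} {Q : Set M.Mat} (hQ : IsPrimeIdealSet Q)
include hQ

lemma inclR_mem {r : R} (hr : r ∈ primeRadicalSet R) : M.inclR r ∈ Q :=
  primeRadicalSet_subset_preimage M.inclR M.projR M.inclR_mul_mul_inclR hQ hr

lemma inclS_mem {s : S} (hs : s ∈ primeRadicalSet S) : M.inclS s ∈ Q :=
  primeRadicalSet_subset_preimage M.inclS M.projS M.inclS_mul_mul_inclS hQ hs

lemma ofV_mem {v : V} (hv : (∀ w, M.mulVW v w ∈ primeRadicalSet R) ∨
    (∀ w, M.mulWV w v ∈ primeRadicalSet S)) : M.ofV v ∈ Q := by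
  refine hQ.mem_of_forall_mul_mul_self_mem fun z => ?_
  rcases hv with hv | hv
  · rw [ofV_mul_mul_ofV]
    exact hQ.1.2.2.2.1 _ (inclR_mem hQ (hv _)) _
  · rw [ofV_mul_mul_ofV']
    exact hQ.1.2.2.2.2 _ (inclS_mem hQ (hv _)) _

lemma ofW_mem {w : W} (hw : (∀ v, M.mulWV w v ∈ primeRadicalSet S) ∨
    (∀ v, M.mulVW v w ∈ primeRadicalSet R)) : M.ofW w ∈ Q := by
  refine hQ.mem_of_forall_mul_mul_self_mem fun z => ?_
  rcases hw with hw | hw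
  · rw [ofW_mul_mul_ofW]
    exact hQ.1.2.2.2.1 _ (inclS_mem hQ (hw _)) _
  · rw [ofW_mul_mul_ofW']
    exact hQ.1.2.2.2.2 _ (inclR_mem hQ (hw _)) _

end IsPrimeIdealSet

variable {M}

lemma projR_mem_primeRadicalSet {t : M.Mat} (ht : t ∈ primeRadicalSet M.Mat) (x y : M.Mat) :
    M.projR (x * t * y) ∈ primeRadicalSet R :=
  primeRadicalSet_subset_cornerLift M.projR M.inclR rfl M.projR_mul_inclR_mul ht x y

lemma projS_mem_primeRadicalSet {t : M.Mat} (ht : t ∈ primeRadicalSet M.Mat) (x y : M.Mat) :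
    M.projS (x * t * y) ∈ primeRadicalSet S :=
  primeRadicalSet_subset_cornerLift M.projS M.inclS rfl M.projS_mul_inclS_mul ht x y

lemma ofV_mem_primeRadicalSet {v : V} (hv : (∀ w, M.mulVW v w ∈ primeRadicalSet R) ∨
    (∀ w, M.mulWV w v ∈ primeRadicalSet S)) : M.ofV v ∈ primeRadicalSet M.Mat :=
  Set.mem_sInter.2 fun _ hQ => ofV_mem hQ hv

lemma ofW_mem_primeRadicalSet {w : W} (hw : (∀ v, M.mulWV w v ∈ primeRadicalSet S) ∨
    (∀ v, M.mulVW v w ∈ primeRadicalSet R)) : M.ofW w ∈ primeRadicalSet M.Mat :=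
  Set.mem_sInter.2 fun _ hQ => ofW_mem hQ hw

variable (M)

lemma setOf_mulVW_mem_eq :
    {v : V | ∀ w : W, M.mulVW v w ∈ primeRadicalSet R} =
      {v : V | ∀ w : W, M.mulWV w v ∈ primeRadicalSet S} := by
  ext v
  refine ⟨fun hv w => ?_, fun hv w => ?_⟩
  · simpa [ofV, ofW] using
      projS_mem_primeRadicalSet (ofV_mem_primeRadicalSet (.inl hv)) (M.ofW w) 1
  · simpa [ofV, ofW] using
      projR_mem_primeRadicalSet (ofV_mem_primeRadicalSet (.inr hv)) 1 (M.ofW w)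

lemma setOf_mulWV_mem_eq :
    {w : W | ∀ v : V, M.mulWV w v ∈ primeRadicalSet S} =
      {w : W | ∀ v : V, M.mulVW v w ∈ primeRadicalSet R} := by
  ext w
  refine ⟨fun hw v => ?_, fun hw v => ?_⟩
  · simpa [ofV, ofW] using
      projR_mem_primeRadicalSet (ofW_mem_primeRadicalSet (.inl hw)) (M.ofV v) 1
  · simpa [ofV, ofW] using
      projS_mem_primeRadicalSet (ofW_mem_primeRadicalSet (.inr hw)) 1 (M.ofV v)

lemma primeRadicalSet_subset_rect :
    primeRadicalSet M.Mat ⊆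
      M.rect (primeRadicalSet R)
        {v : V | ∀ w : W, M.mulVW v w ∈ primeRadicalSet R}
        {w : W | ∀ v : V, M.mulWV w v ∈ primeRadicalSet S}
        (primeRadicalSet S) := by
  intro t ht
  refine ⟨?_, fun w => ?_, fun v => ?_, ?_⟩
  · simpa using projR_mem_primeRadicalSet ht 1 1
  · simpa [ofW] using projR_mem_primeRadicalSet ht 1 (M.ofW w)
  · simpa [ofV] using projS_mem_primeRadicalSet ht 1 (M.ofV v)
  · simpa using projS_mem_primeRadicalSet ht 1 1

lemma rect_subset_primeRadicalSet :
    M.rect (primeRadicalSet R)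
        {v : V | ∀ w : W, M.mulVW v w ∈ primeRadicalSet R}
        {w : W | ∀ v : V, M.mulWV w v ∈ primeRadicalSet S}
        (primeRadicalSet S) ⊆ primeRadicalSet M.Mat := by
  rintro t ⟨hR, hV, hW, hS⟩
  refine Set.mem_sInter.2 fun Q hQ => ?_
  have hadd := hQ.1.2.1
  rw [← M.inclR_add_ofV_add_ofW_add_inclS t]
  exact hadd _ (hadd _ (hadd _ (inclR_mem hQ hR) _ (ofV_mem hQ (.inl hV))) _
    (ofW_mem hQ (.inl hW))) _ (inclS_mem hQ hS)

end MoritaContext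

variable {R S V W : Type*} [Ring R] [Ring S] [AddCommGroup V] [AddCommGroup W]

/-- Theorem 2.9 (Sands): the prime radical of the Morita context ring is
`(P(R), V₀, W₀, P(S))` where `V₀ = {v : vW ⊆ P(R)} = {v : Wv ⊆ P(S)}` and
`W₀ = {w : wV ⊆ P(S)} = {w : Vw ⊆ P(R)}`. -/
theorem stmt12 (M : MoritaContext R S V W) :
    primeRadicalSet M.Mat =
      M.rect (primeRadicalSet R)
        {v : V | ∀ w : W, M.mulVW v w ∈ primeRadicalSet R}
        {w : W | ∀ v : V, M.mulWV w v ∈ primeRadicalSet S}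
        (primeRadicalSet S) ∧
    {v : V | ∀ w : W, M.mulVW v w ∈ primeRadicalSet R} =
      {v : V | ∀ w : W, M.mulWV w v ∈ primeRadicalSet S} ∧
    {w : W | ∀ v : V, M.mulWV w v ∈ primeRadicalSet S} =
      {w : W | ∀ v : V, M.mulVW v w ∈ primeRadicalSet R} :=
  ⟨M.primeRadicalSet_subset_rect.antisymm M.rect_subset_primeRadicalSet,
    M.setOf_mulVW_mem_eq, M.setOf_mulWV_mem_eq⟩
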